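/- arXiv:2105.04884 — 2 statements merged into one kernel-verified Lean document; each statement's English description precedes it below -/
import Mathlib

section
/- For the random-batch estimator F̃ = (n/p)∑_{j∈B} f j of S = ∑_j f j with f : Fin n → ℝ, one has E[F̃² − S²] = ((n−p)/(p(n−1))) (n ∑_j (f j)² − S²) ≤ (n(n−p)/(p(n−1))) ∑_j (f j)², for n ≥ 2 and 1 ≤ p ≤ n. -/
/-!
Expanding the square, `∑_B (∑_{j ∈ B} f j)² = ∑_{i,j} N(i,j) f i f j`, where `N(i,j)` counts the
batches containing both `i` and `j`. Counting the `p`-subsets containing a fixed set `t` gives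
`N · C(n, #t) = C(n, p) · C(p, #t)`, i.e. `i ∈ B` with probability `p/n` and `i, j ∈ B` (`i ≠ j`)
with probability `p(p-1)/(n(n-1))`. Substituting yields the identity, and the bound follows by
dropping `-S² ≤ 0` since `p ≤ n`.
-/

open Finset

namespace Finset

variable {α : Type*} [DecidableEq α]

theorem card_filter_powersetCard_subset_mul_choose (s t : Finset α) (hst : s ⊆ t) (n : ℕ) :
    #{B ∈ t.powersetCard n | s ⊆ B} * (#t).choose #s = (#t).choose n * n.choose #s := by
  by_cases hsn : #s ≤ n
  · rw [card_filter_powersetCard_subset s t n hst hsn, Nat.choose_mul hsn, mul_comm]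
  · have hempty : {B ∈ t.powersetCard n | s ⊆ B} = ∅ :=
      filter_false_of_mem fun B hB hsB ↦ hsn ((card_le_card hsB).trans (mem_powersetCard.1 hB).2.le)
    rw [hempty, Nat.choose_eq_zero_of_lt (not_le.1 hsn)]
    simp

variable [Fintype α]

theorem card_filter_mem_and_mem_powersetCard_mul {K : Type*} [Field K] [CharZero K]
    (p : ℕ) (i j : α) :
    (#{B ∈ powersetCard p univ | i ∈ B ∧ j ∈ B} : K) * (Fintype.card α * (Fintype.card α - 1))
      = (Fintype.card α).choose p * p *
          (if i = j then (Fintype.card α : K) - 1 else (p : K) - 1) := by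
  by_cases hij : i = j
  · subst hij
    have h := card_filter_powersetCard_subset_mul_choose {i} univ (subset_univ _) p
    simp only [card_singleton, Nat.choose_one_right, singleton_subset_iff, card_univ] at h
    simp only [and_self, if_true]
    rw [← mul_assoc]
    exact_mod_cast congrArg (fun m : ℕ ↦ (m : K) * (Fintype.card α - 1)) h
  · have h := card_filter_powersetCard_subset_mul_choose {i, j} univ (subset_univ _) p
    simp only [card_pair hij, insert_subset_iff, singleton_subset_iff, card_univ] at h
    have h' := congrArg (fun m : ℕ ↦ (m : K)) h
    simp only [Nat.cast_mul, Nat.cast_choose_two] at h'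
    rw [if_neg hij]
    linear_combination 2 * h'

theorem sum_sq_sum_eq_sum_sum_card_filter_mul {R : Type*} [CommSemiring R]
    (𝓑 : Finset (Finset α)) (f : α → R) :
    ∑ B ∈ 𝓑, (∑ j ∈ B, f j) ^ 2 = ∑ i, ∑ j, (#{B ∈ 𝓑 | i ∈ B ∧ j ∈ B} : R) * (f i * f j) := by
  simp only [natCast_card_filter, sum_mul, ite_mul, one_mul, zero_mul]
  have hB : ∀ B : Finset α, (∑ j ∈ B, f j) ^ 2
      = ∑ i, ∑ j, if i ∈ B ∧ j ∈ B then f i * f j else 0 := fun B ↦ by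
    simp only [ite_and, sum_ite_irrel, sum_const_zero, Fintype.sum_ite_mem, sq, sum_mul_sum]
  simp only [hB]
  rw [sum_comm]
  exact sum_congr rfl fun i _ ↦ sum_comm

theorem sum_sum_ite_mul_mul_eq {R : Type*} [CommRing R] (a b : R) (f : α → R) :
    ∑ i, ∑ j, (if i = j then a else b) * (f i * f j)
      = (a - b) * ∑ i, f i ^ 2 + b * (∑ i, f i) ^ 2 := by
  have hsplit : ∀ i j, (if i = j then a else b) * (f i * f j)
      = b * (f i * f j) + if i = j then (a - b) * f i ^ 2 else 0 := by
    intro i j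
    split_ifs with h
    · subst h; ring
    · ring
  simp only [hsplit, sum_add_distrib, sum_ite_eq, mem_univ, if_true, ← mul_sum, sq, sum_mul_sum]
  ring

theorem card_mul_sum_powersetCard_sq_sum {K : Type*} [Field K] [CharZero K] (p : ℕ) (f : α → K) :
    (Fintype.card α * (Fintype.card α - 1)) * ∑ B ∈ powersetCard p univ, (∑ j ∈ B, f j) ^ 2
      = (Fintype.card α).choose p * p *
          ((Fintype.card α - p) * ∑ j, f j ^ 2 + (p - 1) * (∑ j, f j) ^ 2) := by
  have hcount := card_filter_mem_and_mem_powersetCard_mul (α := α) (K := K) p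
  calc _ = ∑ i, ∑ j, (#{B ∈ powersetCard p univ | i ∈ B ∧ j ∈ B} : K) *
              (Fintype.card α * (Fintype.card α - 1)) * (f i * f j) := by
          simp only [sum_sq_sum_eq_sum_sum_card_filter_mul, mul_sum]
          exact sum_congr rfl fun i _ ↦ sum_congr rfl fun j _ ↦ by ring
    _ = (Fintype.card α).choose p * p * ∑ i, ∑ j,
          (if i = j then (Fintype.card α : K) - 1 else (p : K) - 1) * (f i * f j) := by
          simp only [hcount, mul_sum, mul_assoc]
    _ = _ := by rw [sum_sum_ite_mul_mul_eq]; ring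

end Finset

/-- Excess second moment of the random-batch estimator:
`E[F̃² − S²] = ((n−p)/(p(n−1)))(n ∑ f² − S²) ≤ (n(n−p)/(p(n−1))) ∑ f²`. -/
theorem random_batch_excess_second_moment (n p : ℕ) (hn : 2 ≤ n) (hp : 1 ≤ p)
    (hpn : p ≤ n) (f : Fin n → ℝ) (S : ℝ) (hS : S = ∑ j, f j) :
    ((n.choose p : ℝ))⁻¹ *
        ∑ B ∈ Finset.powersetCard p (Finset.univ : Finset (Fin n)),
          ((((n : ℝ) / p) * ∑ j ∈ B, f j) ^ 2 - S ^ 2)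
      = (((n : ℝ) - p) / ((p : ℝ) * ((n : ℝ) - 1))) *
          ((n : ℝ) * ∑ j, (f j) ^ 2 - S ^ 2) ∧
    ((n.choose p : ℝ))⁻¹ *
        ∑ B ∈ Finset.powersetCard p (Finset.univ : Finset (Fin n)),
          ((((n : ℝ) / p) * ∑ j ∈ B, f j) ^ 2 - S ^ 2)
      ≤ ((n : ℝ) * ((n : ℝ) - p) / ((p : ℝ) * ((n : ℝ) - 1))) *
          ∑ j, (f j) ^ 2 := by
  have hmoment := card_mul_sum_powersetCard_sq_sum p f
  rw [Fintype.card_fin, ← hS] at hmoment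
  have hp0 : (p : ℝ) ≠ 0 := Nat.cast_ne_zero.2 (by omega)
  have hn1 : (0 : ℝ) < n - 1 := by
    have : (2 : ℝ) ≤ n := by exact_mod_cast hn
    linarith
  have hc : (n.choose p : ℝ) ≠ 0 := by exact_mod_cast (Nat.choose_pos hpn).ne'
  have hexcess : ((n.choose p : ℝ))⁻¹ *
      ∑ B ∈ powersetCard p univ, ((((n : ℝ) / p) * ∑ j ∈ B, f j) ^ 2 - S ^ 2)
        = ((n : ℝ) - p) / (p * (n - 1)) * (n * ∑ j, f j ^ 2 - S ^ 2) := by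
    simp only [sum_sub_distrib, sum_const, card_powersetCard, card_univ, Fintype.card_fin,
      nsmul_eq_mul, mul_pow, ← mul_sum]
    field_simp [hp0, hn1.ne']
    linear_combination (n : ℝ) * hmoment
  refine ⟨hexcess, hexcess ▸ ?_⟩
  have hcoeff : 0 ≤ ((n : ℝ) - p) / (p * (n - 1)) := by
    have : (p : ℝ) ≤ n := by exact_mod_cast hpn
    exact div_nonneg (by linarith) (mul_nonneg p.cast_nonneg hn1.le)
  calc _ ≤ ((n : ℝ) - p) / (p * (n - 1)) * (n * ∑ j, f j ^ 2) := by
        gcongr; linarith [sq_nonneg S]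
    _ = _ := by ring
end

section
/- Let f : Fin n → ℝ³ and let B be a uniform random p-subset of Fin n (1 ≤ p ≤ n ≥ 2). Then Var((n/p) ∑_{j∈B} f j) ≤ ((n−p)/p) · (n/(n−1)) · ∑_j ‖f j‖², where Var denotes E‖F̃ − S‖² with S = ∑_j f j. -/
open Finset
open RealInnerProductSpace

lemma count_mem (n p : ℕ) (hp : 1 ≤ p) (j : Fin n) :
    ((powersetCard p (univ : Finset (Fin n))).filter (fun B => j ∈ B)).card
      = (n-1).choose (p-1) := by
  have hcard : ((univ : Finset (Fin n)).erase j).card = n - 1 := by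
    rw [Finset.card_erase_of_mem (mem_univ j), Finset.card_univ, Fintype.card_fin]
  rw [← hcard, ← card_powersetCard (p-1) ((univ : Finset (Fin n)).erase j)]
  refine Finset.card_bij' (fun B _ => B.erase j) (fun C _ => insert j C) ?_ ?_ ?_ ?_
  · intro B hB
    simp only [mem_filter, mem_powersetCard] at hB
    obtain ⟨⟨hBsub, hBcard⟩, hjB⟩ := hB
    simp only [mem_powersetCard]
    constructor
    · intro x hx
      simp only [mem_erase] at hx ⊢
      exact ⟨hx.1, mem_univ x⟩
    · rw [Finset.card_erase_of_mem hjB, hBcard]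
  · intro C hC
    simp only [mem_powersetCard] at hC
    obtain ⟨hCsub, hCcard⟩ := hC
    have hjC : j ∉ C := fun h => (mem_erase.1 (hCsub h)).1 rfl
    simp only [mem_filter, mem_powersetCard]
    refine ⟨⟨fun x _ => mem_univ x, ?_⟩, mem_insert_self j C⟩
    rw [Finset.card_insert_of_notMem hjC, hCcard]
    omega
  · intro B hB
    simp only [mem_filter] at hB
    exact Finset.insert_erase hB.2
  · intro C hC
    simp only [mem_powersetCard] at hC
    have hjC : j ∉ C := fun h => (mem_erase.1 (hC.1 h)).1 rfl
    exact Finset.erase_insert hjC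

lemma count_pair (n p : ℕ) (hp : 2 ≤ p) (j k : Fin n) (hjk : j ≠ k) :
    ((powersetCard p (univ : Finset (Fin n))).filter (fun B => j ∈ B ∧ k ∈ B)).card
      = (n-2).choose (p-2) := by
  have hk : k ∈ (univ : Finset (Fin n)).erase j := mem_erase.2 ⟨hjk.symm, mem_univ k⟩
  have hcard : (((univ : Finset (Fin n)).erase j).erase k).card = n - 2 := by
    rw [Finset.card_erase_of_mem hk, Finset.card_erase_of_mem (mem_univ j),
      Finset.card_univ, Fintype.card_fin]
    omega
  rw [← hcard, ← card_powersetCard (p-2)]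
  refine Finset.card_bij' (fun B _ => (B.erase j).erase k) (fun C _ => insert j (insert k C))
    ?_ ?_ ?_ ?_
  · intro B hB
    simp only [mem_filter, mem_powersetCard] at hB
    obtain ⟨⟨hBsub, hBcard⟩, hjB, hkB⟩ := hB
    simp only [mem_powersetCard]
    constructor
    · intro x hx
      simp only [mem_erase] at hx ⊢
      exact ⟨hx.1, hx.2.1, mem_univ x⟩
    · rw [Finset.card_erase_of_mem (mem_erase.2 ⟨hjk.symm, hkB⟩),
        Finset.card_erase_of_mem hjB, hBcard]
      omega
  · intro C hC
    simp only [mem_powersetCard] at hC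
    obtain ⟨hCsub, hCcard⟩ := hC
    have hjC : j ∉ C := fun h => (mem_erase.1 (mem_of_mem_erase (hCsub h))).1 rfl
    have hkC : k ∉ C := fun h => (mem_erase.1 (hCsub h)).1 rfl
    have hjkC : j ∉ insert k C := by
      simp only [mem_insert]
      rintro (h | h)
      · exact hjk h
      · exact hjC h
    simp only [mem_filter, mem_powersetCard]
    refine ⟨⟨fun x _ => mem_univ x, ?_⟩, mem_insert_self j _,
      mem_insert_of_mem (mem_insert_self k C)⟩
    rw [Finset.card_insert_of_notMem hjkC, Finset.card_insert_of_notMem hkC, hCcard]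
    omega
  · intro B hB
    simp only [mem_filter] at hB
    obtain ⟨_, hjB, hkB⟩ := hB
    show insert j (insert k ((B.erase j).erase k)) = B
    rw [Finset.insert_erase (mem_erase.2 ⟨hjk.symm, hkB⟩), Finset.insert_erase hjB]
  · intro C hC
    simp only [mem_powersetCard] at hC
    have hjC : j ∉ C := fun h => (mem_erase.1 (mem_of_mem_erase (hC.1 h))).1 rfl
    have hkC : k ∉ C := fun h => (mem_erase.1 (hC.1 h)).1 rfl
    have hjkC : j ∉ insert k C := by
      simp only [mem_insert]; rintro (h | h); exacts [hjk h, hjC h]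
    show ((insert j (insert k C)).erase j).erase k = C
    rw [Finset.erase_insert hjkC, Finset.erase_insert hkC]

lemma count_pair_one (n : ℕ) (j k : Fin n) (hjk : j ≠ k) :
    ((powersetCard 1 (univ : Finset (Fin n))).filter (fun B => j ∈ B ∧ k ∈ B)).card = 0 := by
  rw [Finset.card_eq_zero, Finset.filter_eq_empty_iff]
  intro B hB
  simp only [mem_powersetCard, Finset.card_eq_one] at hB
  obtain ⟨_, a, rfl⟩ := hB
  simp only [mem_singleton]
  rintro ⟨rfl, rfl⟩
  exact hjk rfl

lemma swap1 {n : ℕ} (𝒜 : Finset (Finset (Fin n))) (g : Fin n → ℝ) :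
    ∑ B ∈ 𝒜, ∑ j ∈ B, g j
      = ∑ j, ((𝒜.filter (fun B => j ∈ B)).card : ℝ) * g j := by
  have h1 : ∀ B ∈ 𝒜, ∑ j ∈ B, g j = ∑ j, if j ∈ B then g j else 0 := by
    intro B _
    rw [Finset.sum_ite_mem, Finset.univ_inter]
  rw [Finset.sum_congr rfl h1, Finset.sum_comm]
  refine Finset.sum_congr rfl fun j _ => ?_
  rw [← Finset.sum_filter, Finset.sum_const, nsmul_eq_mul]

lemma swap2 {n : ℕ} (𝒜 : Finset (Finset (Fin n))) (a : Fin n → Fin n → ℝ) :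
    ∑ B ∈ 𝒜, ∑ j ∈ B, ∑ k ∈ B, a j k
      = ∑ j, ∑ k, ((𝒜.filter (fun B => j ∈ B ∧ k ∈ B)).card : ℝ) * a j k := by
  have h1 : ∀ B ∈ 𝒜, ∑ j ∈ B, ∑ k ∈ B, a j k
      = ∑ j, ∑ k, if j ∈ B ∧ k ∈ B then a j k else 0 := by
    intro B _
    have step1 : (∑ j ∈ B, ∑ k ∈ B, a j k) = ∑ j, if j ∈ B then ∑ k ∈ B, a j k else 0 := by
      rw [Finset.sum_ite_mem, Finset.univ_inter]
    rw [step1]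
    refine Finset.sum_congr rfl fun j _ => ?_
    by_cases hj : j ∈ B
    · simp only [hj, if_true, true_and]
      rw [Finset.sum_ite_mem, Finset.univ_inter]
    · simp [hj]
  rw [Finset.sum_congr rfl h1, Finset.sum_comm]
  refine Finset.sum_congr rfl fun j _ => ?_
  rw [Finset.sum_comm]
  refine Finset.sum_congr rfl fun k _ => ?_
  rw [← Finset.sum_filter, Finset.sum_const, nsmul_eq_mul]

/-- Vector-valued random-batch variance bound:
`E‖F̃ − S‖² ≤ ((n−p)/p)·(n/(n−1))·∑ ‖f j‖²`. -/
theorem random_batch_vector_variance_bound (n p : ℕ) (hn : 2 ≤ n) (hp : 1 ≤ p)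
    (hpn : p ≤ n) (f : Fin n → EuclideanSpace ℝ (Fin 3)) :
    ((n.choose p : ℝ))⁻¹ *
        ∑ B ∈ Finset.powersetCard p (Finset.univ : Finset (Fin n)),
          ‖((n : ℝ) / p) • (∑ j ∈ B, f j) - ∑ j, f j‖ ^ 2
      ≤ (((n : ℝ) - p) / p) * ((n : ℝ) / ((n : ℝ) - 1)) * ∑ j, ‖f j‖ ^ 2 := by
  -- basic real facts
  have hn2 : (2:ℝ) ≤ (n:ℝ) := by exact_mod_cast hn
  have hp1 : (1:ℝ) ≤ (p:ℝ) := by exact_mod_cast hp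
  have hpn' : (p:ℝ) ≤ (n:ℝ) := by exact_mod_cast hpn
  have hn0 : (n:ℝ) ≠ 0 := by linarith
  have hp0 : (p:ℝ) ≠ 0 := by linarith
  have hn1 : (n:ℝ) - 1 ≠ 0 := by linarith
  set 𝒜 := Finset.powersetCard p (Finset.univ : Finset (Fin n)) with h𝒜
  set S : EuclideanSpace ℝ (Fin 3) := ∑ j, f j with hS
  set c : ℝ := (n:ℝ) / p with hc
  set N : ℝ := (n.choose p : ℝ) with hN
  set M1 : ℝ := ((n-1).choose (p-1) : ℝ) with hM1def
  set M2 : ℝ := ((p:ℝ) - 1) * M1 / ((n:ℝ) - 1) with hM2def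
  have hNpos : 0 < N := by
    rw [hN]; exact_mod_cast Nat.choose_pos hpn
  set a : Fin n → Fin n → ℝ := fun j k => ⟪f j, f k⟫ with ha
  set P : ℝ := ‖S‖ ^ 2 with hP
  set Q : ℝ := ∑ j, ‖f j‖ ^ 2 with hQ
  -- expansion of each summand
  have expand : ∀ B ∈ 𝒜, ‖c • (∑ j ∈ B, f j) - S‖ ^ 2
      = c^2 * (∑ j ∈ B, ∑ k ∈ B, a j k) - 2*c*(∑ j ∈ B, ⟪f j, S⟫) + ‖S‖^2 := by
    intro B _
    rw [norm_sub_sq_real, norm_smul, mul_pow, Real.norm_eq_abs, sq_abs,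
      real_inner_smul_left, sum_inner]
    have : ‖∑ j ∈ B, f j‖ ^ 2 = ∑ j ∈ B, ∑ k ∈ B, a j k := by
      rw [← real_inner_self_eq_norm_sq, sum_inner]
      exact Finset.sum_congr rfl fun j _ => inner_sum B f (f j)
    rw [this]; ring
  -- total sum
  have hT : ∑ B ∈ 𝒜, ‖c • (∑ j ∈ B, f j) - S‖ ^ 2
      = c^2 * (∑ B ∈ 𝒜, ∑ j ∈ B, ∑ k ∈ B, a j k)
        - 2*c*(∑ B ∈ 𝒜, ∑ j ∈ B, ⟪f j, S⟫) + N * ‖S‖^2 := by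
    rw [Finset.sum_congr rfl expand, Finset.sum_add_distrib, Finset.sum_sub_distrib,
      ← Finset.mul_sum, ← Finset.mul_sum, Finset.sum_const, nsmul_eq_mul, h𝒜,
      card_powersetCard, card_univ, Fintype.card_fin, hN]
  -- counts
  have hcnt1 : ∀ j : Fin n, ((𝒜.filter (fun B => j ∈ B)).card : ℝ) = M1 := by
    intro j; rw [h𝒜, count_mem n p hp j, hM1def]
  have hnatM1 : n * ((n-1).choose (p-1)) = (n.choose p) * p := by
    have h2 := Nat.add_one_mul_choose_eq (n-1) (p-1)
    have e1 : n - 1 + 1 = n := by omega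
    have e2 : p - 1 + 1 = p := by omega
    simp only [Nat.succ_eq_add_one, e1, e2] at h2
    exact h2
  have hM1 : (n:ℝ) * M1 = N * (p:ℝ) := by
    rw [hM1def, hN]; exact_mod_cast hnatM1
  have hcnt2 : ∀ j k : Fin n, j ≠ k →
      ((𝒜.filter (fun B => j ∈ B ∧ k ∈ B)).card : ℝ) = M2 := by
    intro j k hjk
    rcases Nat.lt_or_ge p 2 with hp2 | hp2
    · have hp1' : p = 1 := by omega
      subst hp1'
      rw [h𝒜, count_pair_one n j k hjk, hM2def]
      simp
    · rw [h𝒜, count_pair n p hp2 j k hjk, hM2def, eq_div_iff hn1]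
      have h2 := Nat.add_one_mul_choose_eq (n-2) (p-2)
      have e1 : n - 2 + 1 = n - 1 := by omega
      have e2 : p - 2 + 1 = p - 1 := by omega
      simp only [Nat.succ_eq_add_one, e1, e2] at h2
      -- h2 : (n-1) * (n-2).choose (p-2) = (n-1).choose (p-1) * (p-1)
      have hcast : ((n-1 : ℕ):ℝ) = (n:ℝ) - 1 := by
        have : (1:ℕ) ≤ n := by omega
        push_cast [Nat.cast_sub this]; ring
      have hcastp : ((p-1 : ℕ):ℝ) = (p:ℝ) - 1 := by
        have : (1:ℕ) ≤ p := by omega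
        push_cast [Nat.cast_sub this]; ring
      have := congrArg (fun m : ℕ => (m : ℝ)) h2
      push_cast at this
      rw [hM1def]
      calc ((n-2).choose (p-2) : ℝ) * ((n:ℝ)-1)
          = ((n-1:ℕ):ℝ) * ((n-2).choose (p-2) : ℝ) := by rw [hcast]; ring
        _ = ((n-1).choose (p-1) : ℝ) * ((p-1:ℕ):ℝ) := by exact_mod_cast h2
        _ = ((p:ℝ)-1) * ((n-1).choose (p-1) : ℝ) := by rw [hcastp]; ring
  -- the two structured sums
  have hA1 : ∑ B ∈ 𝒜, ∑ j ∈ B, ⟪f j, S⟫ = M1 * P := by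
    rw [swap1]
    have : ∀ j ∈ (univ : Finset (Fin n)),
        ((𝒜.filter (fun B => j ∈ B)).card : ℝ) * ⟪f j, S⟫ = M1 * ⟪f j, S⟫ := by
      intro j _; rw [hcnt1 j]
    rw [Finset.sum_congr rfl this, ← Finset.mul_sum, ← sum_inner, ← hS,
      real_inner_self_eq_norm_sq, hP]
  have hA2 : ∑ B ∈ 𝒜, ∑ j ∈ B, ∑ k ∈ B, a j k = M2 * P + (M1 - M2) * Q := by
    rw [swap2]
    have step : ∀ j ∈ (univ : Finset (Fin n)), ∀ k ∈ (univ : Finset (Fin n)),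
        ((𝒜.filter (fun B => j ∈ B ∧ k ∈ B)).card : ℝ) * a j k
        = M2 * a j k + (if j = k then (M1 - M2) * a j k else 0) := by
      intro j _ k _
      by_cases hjk : j = k
      · subst hjk
        have : (𝒜.filter (fun B => j ∈ B ∧ j ∈ B)) = 𝒜.filter (fun B => j ∈ B) := by
          simp
        rw [this, hcnt1 j, if_pos rfl]; ring
      · rw [hcnt2 j k hjk, if_neg hjk]; ring
    calc ∑ j, ∑ k, ((𝒜.filter (fun B => j ∈ B ∧ k ∈ B)).card : ℝ) * a j k
        = ∑ j, ∑ k, (M2 * a j k + (if j = k then (M1 - M2) * a j k else 0)) := by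
          exact Finset.sum_congr rfl fun j hj => Finset.sum_congr rfl fun k hk => step j hj k hk
      _ = M2 * (∑ j, ∑ k, a j k) + ∑ j, ∑ k, (if j = k then (M1 - M2) * a j k else 0) := by
          rw [Finset.mul_sum, ← Finset.sum_add_distrib]
          refine Finset.sum_congr rfl fun j _ => ?_
          rw [Finset.mul_sum, ← Finset.sum_add_distrib]
      _ = M2 * P + (M1 - M2) * Q := by
          have h1 : ∑ j, ∑ k, a j k = P := by
            rw [hP, ← real_inner_self_eq_norm_sq, hS, sum_inner]
            exact Finset.sum_congr rfl fun j _ => (inner_sum _ f (f j)).symm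
          have h2 : ∀ j : Fin n, (∑ k, (if j = k then (M1 - M2) * a j k else 0))
              = (M1 - M2) * ‖f j‖^2 := by
            intro j
            rw [Finset.sum_ite_eq, if_pos (mem_univ j), ha]
            simp only [real_inner_self_eq_norm_sq]
          rw [h1, Finset.sum_congr rfl fun j _ => h2 j, ← Finset.mul_sum, hQ]
  -- put it together
  rw [hT, hA1, hA2, ← hP]
  have hM1' : M1 = (p:ℝ) * N / (n:ℝ) := by
    field_simp
    linarith [hM1]
  have hPnn : 0 ≤ P := by rw [hP]; positivity
  have key : N⁻¹ * (c^2 * (M2 * P + (M1 - M2) * Q) - 2*c*(M1 * P) + N * P)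
      = (((n:ℝ) - p) / p) * ((n:ℝ) / ((n:ℝ) - 1)) * Q + (((p:ℝ) - n) / (p * ((n:ℝ)-1))) * P := by
    rw [hM2def, hM1', hc]
    field_simp
    ring
  rw [key]
  have : (((p:ℝ) - n) / (p * ((n:ℝ)-1))) * P ≤ 0 := by
    apply mul_nonpos_of_nonpos_of_nonneg _ hPnn
    apply div_nonpos_of_nonpos_of_nonneg
    · linarith
    · have : 0 < (p:ℝ) * ((n:ℝ)-1) := by nlinarith
      linarith
  linarith
end
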